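/- arXiv:1102.5380 — 2 statements merged into one kernel-verified Lean document; each statement's English description precedes it below -/
import Mathlib

section
/- Let (a^k)_k and (b^k)_k be two sequences of vectors belonging to the class 𝒮. Then for every n ∈ ℕ, Trace[J(a^k,b^k)^n] = Σ_{j=0}^{⌊n/2⌋} n!/((j!)² (n−2j)!) · Σ_{i=1}^k (a_i^k)^{n−2j}(b_i^k)^{2j} + o(k) as k → ∞. -/
open Filter MeasureTheory

noncomputable section

/-- The `k × k` Jacobi (real symmetric tridiagonal) matrix with diagonal entries
`a 0, …, a (k-1)` and sub/super-diagonal entries `b 0, …, b (k-2)` (0-indexed). -/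
def jacobiMatrix (k : ℕ) (a b : ℕ → ℝ) : Matrix (Fin k) (Fin k) ℝ :=
  Matrix.of fun i j =>
    if (i : ℕ) = (j : ℕ) then a i
    else if (i : ℕ) + 1 = (j : ℕ) then b i
    else if (j : ℕ) + 1 = (i : ℕ) then b j
    else 0

theorem jacobiMatrix_isHermitian (k : ℕ) (a b : ℕ → ℝ) :
    (jacobiMatrix k a b).IsHermitian := by
  show _ = _
  ext i j
  simp only [Matrix.conjTranspose_apply, jacobiMatrix, Matrix.of_apply, star_trivial]
  by_cases h1 : (i : ℕ) = (j : ℕ)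
  · have h : i = j := Fin.ext h1
    subst h
    rfl
  · have h1' : ¬ (j : ℕ) = (i : ℕ) := fun h => h1 h.symm
    by_cases h2 : (i : ℕ) + 1 = (j : ℕ)
    · have h3 : ¬ (j : ℕ) + 1 = (i : ℕ) := by omega
      simp [h1, h1', h2, h3]
    · by_cases h3 : (j : ℕ) + 1 = (i : ℕ) <;> simp [h1, h1', h2, h3]

/-- `Trace[φ(J(a,b))] = ∑ⱼ φ(λⱼ)`, the sum of `φ` over the eigenvalues of the Jacobi matrix. -/
def jacobiTrace (k : ℕ) (a b : ℕ → ℝ) (φ : ℝ → ℝ) : ℝ :=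
  ∑ i, φ ((jacobiMatrix_isHermitian k a b).eigenvalues i)

/-- The class `𝒮`: small deviations `∑ᵢ |a_{i+1}^k − a_i^k| = o(k)` and entries in `[0,1]`. -/
def MemS (a : ℕ → ℕ → ℝ) : Prop :=
  ((fun k : ℕ => ∑ i ∈ Finset.range (k - 1), |a k (i + 1) - a k i|)
      =o[Filter.atTop] fun k : ℕ => (k : ℝ)) ∧
  ∀ k : ℕ, ∀ i < k, a k i ∈ Set.Icc (0 : ℝ) 1

/-- The class `𝒮′`: for every `δ ∈ (0,1)`, `∑ᵢ |a_{i+1}^k − a_i^k| = O(k^{1−δ})`, and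
`maxᵢ |a_i^k| = O(log k)`. -/
def MemS' (a : ℕ → ℕ → ℝ) : Prop :=
  (∀ δ : ℝ, δ ∈ Set.Ioo (0 : ℝ) 1 →
    ((fun k : ℕ => ∑ i ∈ Finset.range (k - 1), |a k (i + 1) - a k i|)
        =O[Filter.atTop] fun k : ℕ => (k : ℝ) ^ (1 - δ))) ∧
  ∃ C : ℝ, ∀ᶠ k : ℕ in Filter.atTop, ∀ i < k, |a k i| ≤ C * Real.log k

/-- `μ`-distributed on `I² = [0,1]²`. -/
def MuDistributedI (a b : ℕ → ℕ → ℝ) (μ : Measure (ℝ × ℝ)) : Prop :=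
  ∀ ψ : ℝ × ℝ → ℝ, ContinuousOn ψ (Set.Icc (0 : ℝ) 1 ×ˢ Set.Icc (0 : ℝ) 1) →
    Filter.Tendsto (fun k : ℕ => (1 / (k : ℝ)) * ∑ j ∈ Finset.range k, ψ (a k j, b k j))
      Filter.atTop (nhds (∫ p, ψ p ∂μ))

/-- `μ`-distributed on `ℝ²` (test functions: bounded continuous). -/
def MuDistributedR (a b : ℕ → ℕ → ℝ) (μ : Measure (ℝ × ℝ)) : Prop :=
  ∀ ψ : ℝ × ℝ → ℝ, Continuous ψ → (∃ C : ℝ, ∀ p, |ψ p| ≤ C) →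
    Filter.Tendsto (fun k : ℕ => (1 / (k : ℝ)) * ∑ j ∈ Finset.range k, ψ (a k j, b k j))
      Filter.atTop (nhds (∫ p, ψ p ∂μ))

/-- Tightness via closed bounded rectangles. -/
def TightRect (μ : Measure (ℝ × ℝ)) : Prop :=
  ∀ ε : ℝ, 0 < ε → ∃ x₁ x₂ y₁ y₂ : ℝ,
    μ ((Set.Icc x₁ x₂ ×ˢ Set.Icc y₁ y₂)ᶜ) < ENNReal.ofReal ε

/-- Almost everywhere increasing sequence of vectors. -/
def AEIncreasing (a : ℕ → ℕ → ℝ) : Prop :=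
  Filter.Tendsto
    (fun k : ℕ => (((Finset.range (k - 1)).filter fun i => a k i ≤ a k (i + 1)).card : ℝ) / k)
    Filter.atTop (nhds 1)

/-- Almost everywhere decreasing sequence of vectors. -/
def AEDecreasing (a : ℕ → ℕ → ℝ) : Prop :=
  Filter.Tendsto
    (fun k : ℕ => (((Finset.range (k - 1)).filter fun i => a k (i + 1) ≤ a k i).card : ℝ) / k)
    Filter.atTop (nhds 1)

/-- Almost everywhere monotone sequence of vectors. -/
def AEMonotone (a : ℕ → ℕ → ℝ) : Prop :=
  AEIncreasing a ∨ AEDecreasing a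

/-!
Compare each diagonal entry `(J^n)ᵢᵢ` of `J = J(a, b)` with the same entry of the constant
Jacobi matrix `J(aᵢ, bᵢ)`. By `Aⁿ - Bⁿ = ∑ₘ Aᵐ (A - B) Bⁿ⁻¹⁻ᵐ` and the band structure of `Aᵐ`,
only rows of `A - B` within distance `n` of `i` matter, so the two entries differ by
`n 3ⁿ⁻¹` times the variation of `a, b` over a window of width `2n` around `i`; each variation
term is counted in at most `2n` windows, so the total error is `O(variation) = o(k)`.
Away from the `2n` boundary indices, `J(x, y) = x + y S` with `S = J(0, 1)`, and `(Sᵐ)ᵢᵢ` counts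
the `±1` walks of length `m` returning to `0`, i.e. `C(2j, j)` for `m = 2j`; the binomial
theorem then gives `(J(x, y)ⁿ)ᵢᵢ = ∑ⱼ n!/(j!² (n-2j)!) xⁿ⁻²ʲ y²ʲ`. The boundary indices
contribute `O(1)`.
-/

open Finset Asymptotics

theorem pow_sub_pow_eq_sum {R : Type*} [Ring R] (A B : R) (n : ℕ) :
    A ^ n - B ^ n = ∑ m ∈ range n, A ^ m * (A - B) * B ^ (n - 1 - m) := by
  have h := sum_range_sub (fun m => A ^ m * B ^ (n - m)) n
  simp only [Nat.sub_self, pow_zero, mul_one, Nat.sub_zero, one_mul] at h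
  rw [← h]
  refine sum_congr rfl fun m hm => ?_
  obtain ⟨r, hr⟩ : ∃ r, n - m = r + 1 := ⟨n - 1 - m, by simp at hm; omega⟩
  rw [hr, show n - (m + 1) = r by omega, show n - 1 - m = r by omega, pow_succ, pow_succ']
  noncomm_ring

namespace Matrix

section RowSums

variable {ι : Type*} [Fintype ι]

theorem sum_abs_mul_apply_le {M N : Matrix ι ι ℝ} {p : ι} {c : ℝ}
    (hN : ∀ r, M p r ≠ 0 → ∑ q, |N r q| ≤ c) :
    ∑ q, |(M * N) p q| ≤ (∑ r, |M p r|) * c := by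
  calc ∑ q, |(M * N) p q| ≤ ∑ q, ∑ r, |M p r| * |N r q| := by
        refine sum_le_sum fun q _ => ?_
        simpa only [mul_apply, abs_mul] using abs_sum_le_sum_abs (fun r => M p r * N r q) univ
    _ = ∑ r, |M p r| * ∑ q, |N r q| := by rw [sum_comm]; simp only [mul_sum]
    _ ≤ ∑ r, |M p r| * c := by
        refine sum_le_sum fun r _ => ?_
        by_cases hr : M p r = 0
        · simp [hr]
        · exact mul_le_mul_of_nonneg_left (hN r hr) (abs_nonneg _)
    _ = (∑ r, |M p r|) * c := (sum_mul ..).symm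

theorem sum_abs_pow_apply_le [DecidableEq ι] {M : Matrix ι ι ℝ} {C : ℝ}
    (hM : ∀ p, ∑ q, |M p q| ≤ C) (m : ℕ) (p : ι) : ∑ q, |(M ^ m) p q| ≤ C ^ m := by
  induction m generalizing p with
  | zero => simp [one_apply, abs_ite]
  | succ m ih =>
    have hC : 0 ≤ C := (sum_nonneg fun q _ => abs_nonneg (M p q)).trans (hM p)
    calc ∑ q, |(M ^ (m + 1)) p q| ≤ (∑ r, |(M ^ m) p r|) * C :=
          pow_succ M m ▸ sum_abs_mul_apply_le fun r _ => hM r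
      _ ≤ C ^ m * C := by gcongr; exact ih p
      _ = C ^ (m + 1) := (pow_succ C m).symm

end RowSums

variable {k : ℕ}

def IsBanded {R : Type*} [Zero R] (M : Matrix (Fin k) (Fin k) R) (w : ℕ) : Prop :=
  ∀ p q : Fin k, M p q ≠ 0 → (p : ℕ) ≤ q + w ∧ (q : ℕ) ≤ p + w

section Banded

variable {R : Type*} [Semiring R] {M N : Matrix (Fin k) (Fin k) R} {v w : ℕ}

theorem isBanded_one : (1 : Matrix (Fin k) (Fin k) R).IsBanded 0 := by
  intro p q h
  obtain rfl : p = q := by by_contra hpq; exact h (one_apply_ne hpq)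
  omega

theorem IsBanded.mul (hM : M.IsBanded v) (hN : N.IsBanded w) : (M * N).IsBanded (v + w) := by
  intro p q h
  obtain ⟨r, -, hr⟩ := exists_ne_zero_of_sum_ne_zero (mul_apply (M := M) ▸ h)
  have := hM p r (left_ne_zero_of_mul hr)
  have := hN r q (right_ne_zero_of_mul hr)
  omega

theorem IsBanded.pow (hM : M.IsBanded w) (m : ℕ) : (M ^ m).IsBanded (m * w) := by
  induction m with
  | zero => simpa using isBanded_one
  | succ m ih => simpa [pow_succ, add_mul] using ih.mul hM

end Banded

theorem sum_abs_pow_sub_pow_apply_le {w n : ℕ} {A B : Matrix (Fin k) (Fin k) ℝ} {C ε : ℝ}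
    (hA : A.IsBanded w) (hAC : ∀ p, ∑ q, |A p q| ≤ C) (hBC : ∀ p, ∑ q, |B p q| ≤ C) (i : Fin k)
    (hε : ∀ p : Fin k, (p : ℕ) + w ≤ i + n * w → (i : ℕ) + w ≤ p + n * w →
      ∑ q, |(A - B) p q| ≤ ε) :
    ∑ q, |(A ^ n - B ^ n) i q| ≤ n * C ^ (n - 1) * ε := by
  have hC : 0 ≤ C := (sum_nonneg fun q _ => abs_nonneg (A i q)).trans (hAC i)
  have hterm : ∀ m ∈ range n, ∑ q, |(A ^ m * (A - B) * B ^ (n - 1 - m)) i q| ≤ C ^ (n - 1) * ε := by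
    intro m hm
    rw [mem_range] at hm
    have hw : m * w + w ≤ n * w := by rw [← Nat.succ_mul]; exact Nat.mul_le_mul_right w hm
    have hε0 : 0 ≤ ε := (sum_nonneg fun q _ => abs_nonneg _).trans (hε i (by omega) (by omega))
    have hAm : ∑ p, |(A ^ m * (A - B)) i p| ≤ (∑ p, |(A ^ m) i p|) * ε :=
      sum_abs_mul_apply_le fun p hp => by
        have := (hA.pow m) i p hp
        exact hε p (by omega) (by omega)
    calc ∑ q, |(A ^ m * (A - B) * B ^ (n - 1 - m)) i q|
        ≤ (∑ p, |(A ^ m * (A - B)) i p|) * C ^ (n - 1 - m) :=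
          sum_abs_mul_apply_le fun r _ => sum_abs_pow_apply_le hBC _ r
      _ ≤ (C ^ m * ε) * C ^ (n - 1 - m) := by
          gcongr
          exact hAm.trans (mul_le_mul_of_nonneg_right (sum_abs_pow_apply_le hAC m i) hε0)
      _ = C ^ (n - 1) * ε := by rw [mul_right_comm, ← pow_add, Nat.add_sub_of_le (by omega)]
  calc ∑ q, |(A ^ n - B ^ n) i q|
      ≤ ∑ q, ∑ m ∈ range n, |(A ^ m * (A - B) * B ^ (n - 1 - m)) i q| := by
        refine sum_le_sum fun q _ => ?_
        rw [pow_sub_pow_eq_sum, sum_apply]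
        exact abs_sum_le_sum_abs _ _
    _ = ∑ m ∈ range n, ∑ q, |(A ^ m * (A - B) * B ^ (n - 1 - m)) i q| := sum_comm
    _ ≤ ∑ m ∈ range n, C ^ (n - 1) * ε := sum_le_sum hterm
    _ = n * C ^ (n - 1) * ε := by rw [sum_const, card_range, nsmul_eq_mul, mul_assoc]

end Matrix

def lineWalkCount : ℕ → ℤ → ℕ
  | 0, x => if x = 0 then 1 else 0
  | m + 1, x => lineWalkCount m (x - 1) + lineWalkCount m (x + 1)

theorem lineWalkCount_eq_zero_of_lt_abs {m : ℕ} {x : ℤ} (h : (m : ℤ) < |x|) :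
    lineWalkCount m x = 0 := by
  induction m generalizing x with
  | zero => simp only [lineWalkCount]; split_ifs <;> simp_all
  | succ m ih =>
    rw [lineWalkCount, ih, ih] <;> rw [lt_abs] at * <;> push_cast at h <;> omega

theorem lineWalkCount_eq_zero_of_odd {m : ℕ} {x : ℤ} (h : Odd (m + x)) :
    lineWalkCount m x = 0 := by
  induction m generalizing x with
  | zero => simp only [lineWalkCount]; split_ifs <;> simp_all
  | succ m ih =>
    rw [lineWalkCount, ih, ih] <;> rw [Int.odd_iff] at * <;> push_cast at h <;> omega

theorem lineWalkCount_two_mul_sub {m u : ℕ} (hu : u ≤ m) :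
    lineWalkCount m (2 * u - m) = m.choose u := by
  induction m generalizing u with
  | zero =>
    obtain rfl : u = 0 := by omega
    rfl
  | succ m ih =>
    rw [lineWalkCount]
    rcases u with _ | u
    · rw [lineWalkCount_eq_zero_of_lt_abs (by rw [lt_abs]; push_cast; omega),
        show (2 * ((0 : ℕ) : ℤ) - ((m + 1 : ℕ) : ℤ) + 1) = 2 * (0 : ℕ) - m by push_cast; ring,
        ih (Nat.zero_le m)]
      simp
    · rw [show 2 * ((u + 1 : ℕ) : ℤ) - ((m + 1 : ℕ) : ℤ) - 1 = 2 * u - m by push_cast; ring,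
        show 2 * ((u + 1 : ℕ) : ℤ) - ((m + 1 : ℕ) : ℤ) + 1 = 2 * (u + 1 : ℕ) - m by push_cast; ring,
        ih (by omega), Nat.choose_succ_succ]
      rcases Nat.lt_or_ge m (u + 1) with h | h
      · rw [lineWalkCount_eq_zero_of_lt_abs (by rw [lt_abs]; push_cast; omega),
          Nat.choose_eq_zero_of_lt h]
      · rw [ih h]

theorem lineWalkCount_zero_right (m : ℕ) :
    lineWalkCount m 0 = if Even m then m.choose (m / 2) else 0 := by
  split_ifs with hm
  · obtain ⟨j, rfl⟩ := hm
    rw [show (0 : ℤ) = 2 * (j : ℕ) - ((j + j : ℕ) : ℤ) by push_cast; ring,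
      lineWalkCount_two_mul_sub (by omega)]
    congr 1
    omega
  · exact lineWalkCount_eq_zero_of_odd (by simpa using Nat.not_even_iff_odd.1 hm)

/-- The constant term of `(x + y (t + t⁻¹))ⁿ`. -/
def centralCoeff (n : ℕ) (x y : ℝ) : ℝ :=
  ∑ j ∈ range (n / 2 + 1),
    (n.factorial : ℝ) / ((j.factorial : ℝ) ^ 2 * ((n - 2 * j).factorial : ℝ)) *
      (x ^ (n - 2 * j) * y ^ (2 * j))

theorem choose_two_mul_mul_choose_eq {n j : ℕ} (h : 2 * j ≤ n) :
    (n.choose (2 * j) : ℝ) * ((2 * j).choose j : ℝ) =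
      (n.factorial : ℝ) / ((j.factorial : ℝ) ^ 2 * ((n - 2 * j).factorial : ℝ)) := by
  rw [Nat.cast_choose ℝ h, Nat.cast_choose ℝ (by omega : j ≤ 2 * j),
    show 2 * j - j = j by omega]
  field_simp

theorem sum_range_centralCoeff (n k : ℕ) (x y : ℕ → ℝ) :
    ∑ i ∈ range k, centralCoeff n (x i) (y i) =
      ∑ j ∈ range (n / 2 + 1),
        (n.factorial : ℝ) / ((j.factorial : ℝ) ^ 2 * ((n - 2 * j).factorial : ℝ)) *
          ∑ i ∈ range k, x i ^ (n - 2 * j) * y i ^ (2 * j) := by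
  simp only [centralCoeff, mul_sum]
  exact sum_comm

theorem abs_centralCoeff_le {x y : ℝ} (hx : |x| ≤ 1) (hy : |y| ≤ 1) (n : ℕ) :
    |centralCoeff n x y| ≤ centralCoeff n 1 1 := by
  refine (abs_sum_le_sum_abs _ _).trans (sum_le_sum fun j _ => ?_)
  have hc : (0 : ℝ) ≤ n.factorial / ((j.factorial : ℝ) ^ 2 * ((n - 2 * j).factorial : ℝ)) := by
    positivity
  rw [abs_mul, abs_of_nonneg hc, abs_mul, abs_pow, abs_pow, one_pow, one_pow, mul_one, mul_one]
  exact mul_le_of_le_one_right hc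
    (mul_le_one₀ (pow_le_one₀ (abs_nonneg x) hx) (by positivity) (pow_le_one₀ (abs_nonneg y) hy))

def localVariation (c : ℕ → ℝ) (k n i : ℕ) : ℝ :=
  ∑ l ∈ (range (k - 1)).filter (fun l => i ≤ l + n ∧ l + 1 ≤ i + n), |c (l + 1) - c l|

theorem abs_sub_le_localVariation (c : ℕ → ℝ) {k n i p : ℕ} (hi : i < k) (hp : p < k)
    (h1 : p ≤ i + n) (h2 : i ≤ p + n) : |c p - c i| ≤ localVariation c k n i := by
  have key : ∀ u v, u ≤ v → v < k → i ≤ u + n → v ≤ i + n →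
      |c v - c u| ≤ localVariation c k n i := fun u v huv hv hu hv' =>
    calc |c v - c u| = dist (c u) (c v) := by rw [Real.dist_eq, abs_sub_comm]
      _ ≤ ∑ l ∈ Ico u v, dist (c l) (c (l + 1)) := dist_le_Ico_sum_dist c huv
      _ = ∑ l ∈ Ico u v, |c (l + 1) - c l| :=
        sum_congr rfl fun l _ => by rw [Real.dist_eq, abs_sub_comm]
      _ ≤ localVariation c k n i := by
        refine sum_le_sum_of_subset_of_nonneg (fun l hl => ?_) fun _ _ _ => abs_nonneg _
        simp only [mem_Ico, mem_filter, mem_range] at hl ⊢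
        omega
  rcases le_total i p with h | h
  · exact key i p h hp (by omega) h1
  · exact abs_sub_comm (c p) (c i) ▸ key p i h hi h2 (by omega)

theorem sum_localVariation_le (c : ℕ → ℝ) (k n : ℕ) :
    ∑ i ∈ range k, localVariation c k n i ≤ 2 * n * ∑ l ∈ range (k - 1), |c (l + 1) - c l| := by
  simp only [localVariation, sum_filter]
  rw [sum_comm, mul_sum]
  refine sum_le_sum fun l _ => ?_
  rw [← sum_filter, sum_const, nsmul_eq_mul]
  gcongr
  calc (((range k).filter fun i => i ≤ l + n ∧ l + 1 ≤ i + n).card : ℝ)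
      ≤ (Ico (l + 1 - n) (l + n + 1)).card := by
        gcongr
        intro i hi
        simp only [mem_filter, mem_range, mem_Ico] at hi ⊢
        omega
    _ ≤ 2 * n := by simp only [Nat.card_Ico]; norm_cast; omega

theorem card_filter_not_interior_le (k n : ℕ) :
    ((range k).filter fun i => ¬ (n ≤ i ∧ i + n < k)).card ≤ 2 * n := by
  calc ((range k).filter fun i => ¬ (n ≤ i ∧ i + n < k)).card
      ≤ (range n ∪ Ico (k - n) k).card := by
        refine card_le_card fun i hi => ?_
        simp only [mem_filter, mem_range, mem_union, mem_Ico] at hi ⊢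
        omega
    _ ≤ 2 * n := by
        refine (card_union_le _ _).trans ?_
        simp only [card_range, Nat.card_Ico]
        omega

section Jacobi

open Matrix

variable {k : ℕ}

theorem isBanded_jacobiMatrix (a b : ℕ → ℝ) : (jacobiMatrix k a b).IsBanded 1 := by
  intro p q h
  simp only [jacobiMatrix, of_apply] at h
  split_ifs at h <;> first | omega | exact absurd rfl h

theorem jacobiMatrix_sub (a b a' b' : ℕ → ℝ) :
    jacobiMatrix k a b - jacobiMatrix k a' b' = jacobiMatrix k (a - a') (b - b') := by
  ext p q
  simp only [jacobiMatrix, Matrix.sub_apply, of_apply, Pi.sub_apply]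
  split_ifs <;> ring

theorem jacobiMatrix_const (x y : ℝ) :
    jacobiMatrix k (fun _ => x) (fun _ => y) = x • 1 + y • jacobiMatrix k 0 1 := by
  ext p q
  simp only [jacobiMatrix, Matrix.add_apply, Matrix.smul_apply, one_apply, of_apply, Fin.ext_iff,
    Pi.zero_apply, Pi.one_apply, smul_eq_mul]
  split_ifs <;> simp_all

theorem sum_ite_val_eq_le {c : ℝ} (hc : 0 ≤ c) (m : ℕ) :
    ∑ q : Fin k, (if (q : ℕ) = m then c else 0) ≤ c := by
  rw [Fin.sum_univ_eq_sum_range (fun q => if q = m then c else 0), sum_ite_eq']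
  split_ifs <;> simp [hc]

theorem sum_abs_jacobiMatrix_apply_le (a b : ℕ → ℝ) (p : Fin k) :
    ∑ q, |jacobiMatrix k a b p q| ≤ |a p| + |b p| + |b (p - 1)| := by
  have hentry : ∀ q : Fin k, |jacobiMatrix k a b p q| ≤ (if q = p then |a p| else 0) +
      (if (q : ℕ) = p + 1 then |b p| else 0) + (if (q : ℕ) = p - 1 then |b (p - 1)| else 0) := by
    intro q
    have hb : (q : ℕ) + 1 = p → b q = b (p - 1) := fun h => by rw [← h, Nat.add_sub_cancel]
    have := abs_nonneg (a p); have := abs_nonneg (b p); have := abs_nonneg (b (p - 1))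
    simp only [jacobiMatrix, of_apply, Fin.ext_iff]
    split_ifs <;> first | (exfalso; omega) | (rw [hb (by omega)]; linarith) | linarith | simp
  calc ∑ q, |jacobiMatrix k a b p q| ≤ _ := sum_le_sum fun q _ => hentry q
    _ ≤ |a p| + |b p| + |b (p - 1)| := by
      simp only [sum_add_distrib, sum_ite_eq', mem_univ, if_true]
      gcongr <;> exact sum_ite_val_eq_le (abs_nonneg _) _

theorem jacobiMatrix_zero_one_mul_apply (M : Matrix (Fin k) (Fin k) ℝ) {i : Fin k}
    (h1 : 0 < (i : ℕ)) (h2 : (i : ℕ) + 1 < k) (q : Fin k) :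
    (jacobiMatrix k 0 1 * M) i q = M ⟨i - 1, by omega⟩ q + M ⟨i + 1, h2⟩ q := by
  have hrow : ∀ p, jacobiMatrix k 0 1 i p =
      (if p = ⟨i - 1, by omega⟩ then 1 else 0) + (if p = ⟨i + 1, h2⟩ then 1 else 0) := by
    intro p
    simp only [jacobiMatrix, of_apply, Fin.ext_iff, Pi.zero_apply, Pi.one_apply]
    split_ifs <;> first | (exfalso; omega) | norm_num
  simp only [mul_apply, hrow, add_mul, ite_mul, one_mul, zero_mul, sum_add_distrib, sum_ite_eq',
    mem_univ, if_true]

theorem jacobiMatrix_zero_one_pow_apply {m : ℕ} {i : Fin k} (h1 : m ≤ (i : ℕ))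
    (h2 : (i : ℕ) + m < k) (q : Fin k) :
    (jacobiMatrix k 0 1 ^ m) i q = lineWalkCount m ((q : ℤ) - i) := by
  induction m generalizing i with
  | zero =>
    simp only [pow_zero, one_apply, lineWalkCount, sub_eq_zero, Fin.ext_iff]
    split_ifs <;> simp_all [eq_comm]
  | succ m ih =>
    rw [pow_succ', jacobiMatrix_zero_one_mul_apply _ (by omega) (by omega),
      ih (by simp; omega) (by simp; omega), ih (by simp; omega) (by simp; omega), lineWalkCount]
    push_cast
    rw [add_comm]
    congr 3 <;> omega

theorem jacobiMatrix_const_pow_apply_self {n : ℕ} (x y : ℝ) {i : Fin k} (h1 : n ≤ (i : ℕ))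
    (h2 : (i : ℕ) + n < k) :
    (jacobiMatrix k (fun _ => x) (fun _ => y) ^ n) i i = centralCoeff n x y := by
  set F : ℕ → ℝ := fun m => n.choose m * (x ^ (n - m) * y ^ m) * lineWalkCount m 0
  have hexpand :
      (jacobiMatrix k (fun _ => x) (fun _ => y) ^ n) i i = ∑ m ∈ range (n + 1), F m := by
    have hcomm : Commute (y • jacobiMatrix k 0 1) (x • (1 : Matrix (Fin k) (Fin k) ℝ)) :=
      ((Commute.one_right _).smul_left y).smul_right x
    rw [jacobiMatrix_const, add_comm, hcomm.add_pow, Matrix.sum_apply]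
    refine sum_congr rfl fun m hm => ?_
    rw [mem_range] at hm
    rw [smul_pow, smul_pow, one_pow, smul_mul_smul_comm, mul_one, ← nsmul_eq_mul',
      Matrix.smul_apply, Matrix.smul_apply, jacobiMatrix_zero_one_pow_apply (by omega) (by omega),
      sub_self, nsmul_eq_mul, smul_eq_mul]
    ring
  have heven : ∀ j ∈ range (n / 2 + 1), F (2 * j) =
      (n.factorial : ℝ) / ((j.factorial : ℝ) ^ 2 * ((n - 2 * j).factorial : ℝ)) *
        (x ^ (n - 2 * j) * y ^ (2 * j)) := by
    intro j hj
    rw [mem_range] at hj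
    simp only [F, lineWalkCount_zero_right, even_two_mul, if_true,
      Nat.mul_div_cancel_left _ two_pos]
    rw [← choose_two_mul_mul_choose_eq (by omega)]
    ring
  have hodd : ∀ m ∈ range (n + 1), m ∉ (range (n / 2 + 1)).image (2 * ·) → F m = 0 := by
    intro m hm hm'
    have : ¬ Even m := fun ⟨j, hj⟩ => hm' (mem_image.2 ⟨j, by simp at hm ⊢; omega, by omega⟩)
    simp [F, lineWalkCount_zero_right, this]
  rw [hexpand, centralCoeff, ← sum_congr rfl heven,
    ← sum_subset (fun m hm => by simp at hm ⊢; omega) hodd,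
    sum_image (fun _ _ _ _ h => by simpa using h)]

variable {a b : ℕ → ℝ}

theorem abs_jacobiMatrix_pow_apply_self_sub_const_le (ha : ∀ l < k, |a l| ≤ 1)
    (hb : ∀ l < k, |b l| ≤ 1) (n : ℕ) (i : Fin k) :
    |(jacobiMatrix k a b ^ n) i i - (jacobiMatrix k (fun _ => a i) (fun _ => b i) ^ n) i i| ≤
      n * 3 ^ (n - 1) * (localVariation a k n i + 2 * localVariation b k n i) := by
  rw [← Matrix.sub_apply]
  refine (single_le_sum (fun q _ => abs_nonneg _) (mem_univ i)).trans <|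
    sum_abs_pow_sub_pow_apply_le (isBanded_jacobiMatrix a b) (fun p => ?_) (fun p => ?_) i
      fun p h1 h2 => ?_
  · have := ha p p.2; have := hb p p.2; have := hb (p - 1) (by omega)
    linarith [sum_abs_jacobiMatrix_apply_le a b p]
  · have := ha i i.2; have := hb i i.2
    linarith [sum_abs_jacobiMatrix_apply_le (fun _ => a i) (fun _ => b i) p]
  · rw [jacobiMatrix_sub]
    have := abs_sub_le_localVariation a (n := n) i.2 p.2 (by omega) (by omega)
    have := abs_sub_le_localVariation b (n := n) i.2 p.2 (by omega) (by omega)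
    have := abs_sub_le_localVariation b (n := n) (p := p - 1) i.2 (by omega) (by omega) (by omega)
    have := sum_abs_jacobiMatrix_apply_le (a - fun _ => a i) (b - fun _ => b i) p
    simp only [Pi.sub_apply] at this
    linarith

theorem sum_abs_jacobiMatrix_pow_apply_self_sub_const_le (ha : ∀ l < k, |a l| ≤ 1)
    (hb : ∀ l < k, |b l| ≤ 1) (n : ℕ) :
    ∑ i : Fin k,
        |(jacobiMatrix k a b ^ n) i i - (jacobiMatrix k (fun _ => a i) (fun _ => b i) ^ n) i i| ≤
      2 * n ^ 2 * 3 ^ (n - 1) * (∑ l ∈ range (k - 1), |a (l + 1) - a l| +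
        2 * ∑ l ∈ range (k - 1), |b (l + 1) - b l|) := by
  refine (sum_le_sum fun i _ => abs_jacobiMatrix_pow_apply_self_sub_const_le ha hb n i).trans ?_
  rw [← mul_sum, Fin.sum_univ_eq_sum_range
    (fun i => localVariation a k n i + 2 * localVariation b k n i), sum_add_distrib, ← mul_sum]
  have := sum_localVariation_le a k n
  have := sum_localVariation_le b k n
  calc (n : ℝ) * 3 ^ (n - 1) * (∑ i ∈ range k, localVariation a k n i +
        2 * ∑ i ∈ range k, localVariation b k n i)
      ≤ n * 3 ^ (n - 1) * (2 * n * ∑ l ∈ range (k - 1), |a (l + 1) - a l| +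
        2 * (2 * n * ∑ l ∈ range (k - 1), |b (l + 1) - b l|)) := by gcongr
    _ = _ := by ring

theorem sum_abs_jacobiMatrix_const_pow_apply_self_sub_le (ha : ∀ l < k, |a l| ≤ 1)
    (hb : ∀ l < k, |b l| ≤ 1) (n : ℕ) :
    ∑ i : Fin k, |(jacobiMatrix k (fun _ => a i) (fun _ => b i) ^ n) i i -
        centralCoeff n (a i) (b i)| ≤ 2 * n * (3 ^ n + centralCoeff n 1 1) := by
  set K := 3 ^ n + centralCoeff n 1 1
  have hK : 0 ≤ K := add_nonneg (by positivity)
    ((abs_nonneg _).trans (abs_centralCoeff_le (x := 0) (y := 0) (by simp) (by simp) n))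
  have hterm : ∀ i : Fin k, |(jacobiMatrix k (fun _ => a i) (fun _ => b i) ^ n) i i -
      centralCoeff n (a i) (b i)| ≤ if n ≤ (i : ℕ) ∧ (i : ℕ) + n < k then 0 else K := by
    intro i
    split_ifs with hi
    · rw [jacobiMatrix_const_pow_apply_self _ _ hi.1 hi.2, sub_self, abs_zero]
    · have hrow : ∀ p, ∑ q, |jacobiMatrix k (fun _ => a i) (fun _ => b i) p q| ≤ 3 := fun p => by
        have := ha i i.2; have := hb i i.2
        linarith [sum_abs_jacobiMatrix_apply_le (fun _ => a i) (fun _ => b i) p]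
      refine (abs_sub _ _).trans (add_le_add ?_ (abs_centralCoeff_le (ha i i.2) (hb i i.2) n))
      exact (single_le_sum (fun q _ => abs_nonneg _) (mem_univ i)).trans
        (sum_abs_pow_apply_le hrow n i)
  refine (sum_le_sum fun i _ => hterm i).trans ?_
  rw [Fin.sum_univ_eq_sum_range (fun i => if n ≤ i ∧ i + n < k then 0 else K), sum_ite,
    sum_const_zero, zero_add, sum_const, nsmul_eq_mul]
  gcongr
  exact_mod_cast card_filter_not_interior_le k n

theorem abs_trace_jacobiMatrix_pow_sub_sum_centralCoeff_le (ha : ∀ l < k, |a l| ≤ 1)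
    (hb : ∀ l < k, |b l| ≤ 1) (n : ℕ) :
    |trace (jacobiMatrix k a b ^ n) - ∑ i ∈ range k, centralCoeff n (a i) (b i)| ≤
      2 * n ^ 2 * 3 ^ (n - 1) * (∑ l ∈ range (k - 1), |a (l + 1) - a l| +
        2 * ∑ l ∈ range (k - 1), |b (l + 1) - b l|) + 2 * n * (3 ^ n + centralCoeff n 1 1) := by
  set B : Fin k → Matrix (Fin k) (Fin k) ℝ := fun i => jacobiMatrix k (fun _ => a i) (fun _ => b i)
  rw [trace, ← Fin.sum_univ_eq_sum_range (fun i => centralCoeff n (a i) (b i)), ← sum_sub_distrib]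
  calc |∑ i, ((jacobiMatrix k a b ^ n).diag i - centralCoeff n (a i) (b i))|
      ≤ ∑ i, (|(jacobiMatrix k a b ^ n) i i - (B i ^ n) i i| +
          |(B i ^ n) i i - centralCoeff n (a i) (b i)|) :=
        (abs_sum_le_sum_abs _ _).trans (sum_le_sum fun i _ => abs_sub_le _ _ _)
    _ ≤ _ := by
        rw [sum_add_distrib]
        exact add_le_add (sum_abs_jacobiMatrix_pow_apply_self_sub_const_le ha hb n)
          (sum_abs_jacobiMatrix_const_pow_apply_self_sub_le ha hb n)

end Jacobi

theorem MemS.abs_le_one {a : ℕ → ℕ → ℝ} (ha : MemS a) (k : ℕ) : ∀ l < k, |a k l| ≤ 1 :=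
  fun l hl => abs_le.2 ⟨by linarith [(ha.2 k l hl).1], (ha.2 k l hl).2⟩

/-- For `(a^k)ₖ, (b^k)ₖ ∈ 𝒮` and every `n`,
`Trace[J(a^k,b^k)^n] = ∑_{j=0}^{⌊n/2⌋} n!/((j!)²(n−2j)!) ∑ᵢ (aᵢ^k)^{n−2j}(bᵢ^k)^{2j} + o(k)`. -/
theorem trace_pow_memS (a b : ℕ → ℕ → ℝ) (ha : MemS a) (hb : MemS b) (n : ℕ) :
    (fun k : ℕ =>
        Matrix.trace ((jacobiMatrix k (a k) (b k)) ^ n) -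
          ∑ j ∈ Finset.range (n / 2 + 1),
            (n.factorial : ℝ) / (((j.factorial : ℝ)) ^ 2 * ((n - 2 * j).factorial : ℝ)) *
              ∑ i ∈ Finset.range k, a k i ^ (n - 2 * j) * b k i ^ (2 * j))
      =o[Filter.atTop] fun k : ℕ => (k : ℝ) := by
  have hbound : (fun k : ℕ => 2 * n ^ 2 * 3 ^ (n - 1) *
      (∑ l ∈ range (k - 1), |a k (l + 1) - a k l| +
        2 * ∑ l ∈ range (k - 1), |b k (l + 1) - b k l|) +
      2 * n * (3 ^ n + centralCoeff n 1 1)) =o[atTop] fun k : ℕ => (k : ℝ) :=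
    ((ha.1.add (hb.1.const_mul_left 2)).const_mul_left _).add <| isLittleO_const_left.2 <|
      Or.inr <| tendsto_norm_atTop_atTop.comp tendsto_natCast_atTop_atTop
  simp only [← sum_range_centralCoeff]
  refine (IsBigO.of_norm_le fun k => ?_).trans_isLittleO hbound
  rw [Real.norm_eq_abs]
  exact abs_trace_jacobiMatrix_pow_sub_sum_centralCoeff_le (ha.abs_le_one k) (hb.abs_le_one k) n
end
end

section
/- Let (a^k)_k be a sequence of vectors a^k = (a_1^k,…,a_k^k) with 0 ≤ a_i^k ≤ 1 for all i and k, and suppose (a^k)_k is a.e. monotone. Then Σ_{i=1}^{k-1} |a_{i+1}^k − a_i^k| = o(k) as k → ∞; i.e., (a^k)_k belongs to the class 𝒮. -/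
open Filter MeasureTheory

noncomputable section

/-!
Write `Δᵢ = a_{i+1} - a_i`. Then `|Δᵢ| = Δᵢ + 2 max(-Δᵢ, 0)`; the `Δᵢ` telescope to
`a_k - a_1 ≤ 1`, and `max(-Δᵢ, 0) ≤ 1` vanishes except at the descents. So the total variation
is at most `1 + 2 · #descents`, which is `o(k)` for an a.e. increasing sequence. The a.e.
decreasing case is the same argument with ascents in place of descents.
-/

open Filter Finset Asymptotics Topology

section Variation

variable {x : ℕ → ℝ} {n : ℕ} {c d : ℝ}

theorem sum_abs_sub_le_of_mem_Icc_descents (hx : ∀ i ≤ n, x i ∈ Set.Icc c d) :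
    ∑ i ∈ range n, |x (i + 1) - x i| ≤ (d - c) * (1 + 2 * #{i ∈ range n | x (i + 1) < x i}) := by
  have hstep : ∀ i ∈ range n, |x (i + 1) - x i| ≤
      (x (i + 1) - x i) + 2 * (if x (i + 1) < x i then d - c else 0) := by
    intro i hi
    have hi := mem_range.1 hi
    obtain ⟨hc, hd⟩ := hx i hi.le
    obtain ⟨hc', hd'⟩ := hx (i + 1) hi
    split_ifs with hdesc
    · rw [abs_of_neg (by linarith)]; linarith
    · rw [abs_of_nonneg (by linarith)]; linarith
  have htel : ∑ i ∈ range n, (x (i + 1) - x i) ≤ d - c := by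
    rw [sum_range_sub]
    linarith [(hx n le_rfl).2, (hx 0 n.zero_le).1]
  have hcount : ∑ i ∈ range n, (if x (i + 1) < x i then d - c else 0) =
      #{i ∈ range n | x (i + 1) < x i} * (d - c) := by
    rw [← sum_filter, sum_const, nsmul_eq_mul]
  calc ∑ i ∈ range n, |x (i + 1) - x i|
      ≤ ∑ i ∈ range n, ((x (i + 1) - x i) + 2 * (if x (i + 1) < x i then d - c else 0)) :=
        sum_le_sum hstep
    _ ≤ (d - c) + 2 * (#{i ∈ range n | x (i + 1) < x i} * (d - c)) := by
        rw [sum_add_distrib, ← mul_sum, hcount]; linarith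
    _ = (d - c) * (1 + 2 * #{i ∈ range n | x (i + 1) < x i}) := by ring

theorem sum_abs_sub_le_of_mem_Icc_ascents (hx : ∀ i ≤ n, x i ∈ Set.Icc c d) :
    ∑ i ∈ range n, |x (i + 1) - x i| ≤ (d - c) * (1 + 2 * #{i ∈ range n | x i < x (i + 1)}) := by
  have hneg : ∀ i ≤ n, -x i ∈ Set.Icc (-d) (-c) := fun i hi =>
    ⟨neg_le_neg (hx i hi).2, neg_le_neg (hx i hi).1⟩
  have h := sum_abs_sub_le_of_mem_Icc_descents hneg
  simp only [neg_lt_neg_iff, neg_sub_neg] at h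
  calc ∑ i ∈ range n, |x (i + 1) - x i| = ∑ i ∈ range n, |x i - x (i + 1)| :=
        sum_congr rfl fun i _ => abs_sub_comm _ _
    _ ≤ _ := h

end Variation

theorem isLittleO_card_filter_not {P : ℕ → ℕ → Prop} [∀ k, DecidablePred (P k)]
    (h : Tendsto (fun k => (#{i ∈ range (k - 1) | P k i} : ℝ) / k) atTop (𝓝 1)) :
    (fun k => (#{i ∈ range (k - 1) | ¬P k i} : ℝ)) =o[atTop] fun k => (k : ℝ) := by
  refine (isLittleO_iff_tendsto fun k hk => ?_).2 ?_
  · obtain rfl : k = 0 := by exact_mod_cast hk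
    simp
  have hle : ∀ᶠ k : ℕ in atTop,
      (#{i ∈ range (k - 1) | ¬P k i} : ℝ) / k ≤ 1 - (#{i ∈ range (k - 1) | P k i} : ℝ) / k := by
    filter_upwards [eventually_gt_atTop 0] with k hk
    have hsplit := card_filter_add_card_filter_not (s := range (k - 1)) (P k)
    rw [card_range] at hsplit
    have hsum : (#{i ∈ range (k - 1) | P k i} : ℝ) + #{i ∈ range (k - 1) | ¬P k i} ≤ k := by
      exact_mod_cast hsplit.le.trans (Nat.sub_le k 1)
    rw [le_sub_iff_add_le, ← add_div, div_le_one (by positivity)]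
    linarith
  exact squeeze_zero' (Eventually.of_forall fun k => by positivity) hle
    (by simpa using h.const_sub 1)

/-- an a.e. monotone sequence of vectors with entries in `[0,1]` has small
deviations, i.e. belongs to the class `𝒮`. -/
theorem aemonotone_memS (a : ℕ → ℕ → ℝ)
    (hbd : ∀ k : ℕ, ∀ i < k, a k i ∈ Set.Icc (0 : ℝ) 1)
    (hm : AEMonotone a) :
    (fun k : ℕ => ∑ i ∈ Finset.range (k - 1), |a k (i + 1) - a k i|)
      =o[Filter.atTop] fun k : ℕ => (k : ℝ) := by
  have hbd' : ∀ k ≥ 1, ∀ i ≤ k - 1, a k i ∈ Set.Icc (0 : ℝ) 1 := fun k hk i hi =>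
    hbd k i (by omega)
  obtain ⟨N, hN, hvar⟩ : ∃ N : ℕ → ℕ, (fun k => (N k : ℝ)) =o[atTop] (fun k => (k : ℝ)) ∧
      ∀ k ≥ 1, ∑ i ∈ range (k - 1), |a k (i + 1) - a k i| ≤ 1 + 2 * N k := by
    rcases hm with hinc | hdec
    · refine ⟨_, isLittleO_card_filter_not hinc, fun k hk => ?_⟩
      simpa only [not_le, sub_zero, one_mul] using sum_abs_sub_le_of_mem_Icc_descents (hbd' k hk)
    · refine ⟨_, isLittleO_card_filter_not hdec, fun k hk => ?_⟩
      simpa only [not_le, sub_zero, one_mul] using sum_abs_sub_le_of_mem_Icc_ascents (hbd' k hk)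
  have hbound : (fun k => 1 + 2 * (N k : ℝ)) =o[atTop] fun k => (k : ℝ) :=
    ((isLittleO_one_left_iff ℝ).2 (by simpa using tendsto_natCast_atTop_atTop)).add
      (hN.const_mul_left 2)
  refine IsBigO.trans_isLittleO (IsBigO.of_bound 1 ?_) hbound
  filter_upwards [eventually_ge_atTop 1] with k hk
  rw [Real.norm_of_nonneg (sum_nonneg fun _ _ => abs_nonneg _),
    Real.norm_of_nonneg (by positivity), one_mul]
  exact hvar k hk
end
end
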